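/- For every type X and every Ψ : K (K (K X)), one has t_X (Finsupp.mapDomain μ_X Ψ) = μ_{K X} (Finsupp.mapDomain t_X (t_{K X} Ψ)); that is, the twist map of the free R-module monad satisfies t ∘ (K ⋄ μ) = (μ ⋄ K) ∘ (K ⋄ t) ∘ (t ⋄ K) (the other half of condition (3) of the definition of a twist map). -/

import Mathlib

noncomputable section

/-- `Keta R X` is the unit `η_X : X → K X` of the free `R`-module monad,
`x ↦ Finsupp.single x 1`. -/
def Keta (R : Type*) [Ring R] (X : Type*) : X → (X →₀ R) :=
  fun x => Finsupp.single x 1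

/-- `Kmu R X : K (K X) → K X` is the multiplication `μ_X` of the free `R`-module
monad, the `R`-linear extension of the identity of `K X`. -/
def Kmu (R : Type*) [Ring R] (X : Type*) : ((X →₀ R) →₀ R) → (X →₀ R) :=
  fun Φ => Φ.sum fun g a => a • g

/-- The Bousfield–Kan twist map `t_X : K (K X) → K (K X)` of the free `R`-module
monad: `t_X Φ = η_{K X} (μ_X Φ) − Φ + (K η_X) (μ_X Φ)`. -/
def Ktw (R : Type*) [Ring R] (X : Type*) : ((X →₀ R) →₀ R) → ((X →₀ R) →₀ R) :=
  fun Φ => Finsupp.single (Kmu R X Φ) 1 - Φ + Finsupp.mapDomain (Keta R X) (Kmu R X Φ)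

section AuxTwist

variable {R : Type*} [Ring R] {X Y : Type*}

lemma Kmu_eq_total (Φ : (X →₀ R) →₀ R) :
    Kmu R X Φ = Finsupp.linearCombination R (id : (X →₀ R) → (X →₀ R)) Φ := by
  simp [Kmu, Finsupp.linearCombination_apply]

lemma Kmu_single (g : X →₀ R) (a : R) : Kmu R X (Finsupp.single g a) = a • g := by
  simp [Kmu_eq_total]

lemma Kmu_add (Φ Φ' : (X →₀ R) →₀ R) :
    Kmu R X (Φ + Φ') = Kmu R X Φ + Kmu R X Φ' := by
  simp [Kmu_eq_total]

lemma Kmu_sub (Φ Φ' : (X →₀ R) →₀ R) :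
    Kmu R X (Φ - Φ') = Kmu R X Φ - Kmu R X Φ' := by
  simp [Kmu_eq_total]

lemma Kmu_smul (a : R) (Φ : (X →₀ R) →₀ R) :
    Kmu R X (a • Φ) = a • Kmu R X Φ := by
  simp [Kmu_eq_total]

lemma mapDomain_sub (f : X → Y) (Φ Φ' : X →₀ R) :
    Finsupp.mapDomain f (Φ - Φ') = Finsupp.mapDomain f Φ - Finsupp.mapDomain f Φ' := by
  simpa using (Finsupp.lmapDomain R R f).map_sub Φ Φ'

/-- monad associativity -/
lemma Kmu_assoc (Ψ : ((X →₀ R) →₀ R) →₀ R) :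
    Kmu R X (Finsupp.mapDomain (Kmu R X) Ψ) = Kmu R X (Kmu R (X →₀ R) Ψ) := by
  induction Ψ using Finsupp.induction_linear with
  | zero => simp [Kmu, Finsupp.mapDomain]
  | add a b ha hb =>
      rw [Finsupp.mapDomain_add, Kmu_add, Kmu_add, Kmu_add, ha, hb]
  | single Φ a =>
      rw [Finsupp.mapDomain_single, Kmu_single, Kmu_single, Kmu_smul]

lemma Kmu_mapDomain_mapDomain (f : X → Y) (Φ : (X →₀ R) →₀ R) :
    Kmu R Y (Finsupp.mapDomain (Finsupp.mapDomain f) Φ) =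
      Finsupp.mapDomain f (Kmu R X Φ) := by
  induction Φ using Finsupp.induction_linear with
  | zero => simp [Kmu, Finsupp.mapDomain]
  | add a b ha hb =>
      rw [Finsupp.mapDomain_add, Kmu_add, Kmu_add, Finsupp.mapDomain_add, ha, hb]
  | single g a =>
      rw [Finsupp.mapDomain_single, Kmu_single, Kmu_single, Finsupp.mapDomain_smul]

lemma Ktw_single_one (g : X →₀ R) :
    Ktw R X (Finsupp.single g 1) = Finsupp.mapDomain (Keta R X) g := by
  simp [Ktw, Kmu_single]

lemma Kmu_mapDomain_Ktw (Φ : ((X →₀ R) →₀ R) →₀ R) :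
    Kmu R (X →₀ R) (Finsupp.mapDomain (Ktw R X) Φ) =
      Finsupp.mapDomain (Kmu R X) Φ - Kmu R (X →₀ R) Φ
        + Finsupp.mapDomain (Keta R X) (Kmu R X (Kmu R (X →₀ R) Φ)) := by
  induction Φ using Finsupp.induction_linear with
  | zero => simp [Kmu, Finsupp.mapDomain]
  | add a b ha hb =>
      simp only [Finsupp.mapDomain_add, Kmu_add, ha, hb]
      abel
  | single Ψ a =>
      rw [Finsupp.mapDomain_single, Kmu_single, Finsupp.mapDomain_single, Kmu_single,
        Kmu_smul, Finsupp.mapDomain_smul, Ktw]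
      rw [smul_add, smul_sub, Finsupp.smul_single', mul_one]

end AuxTwist

/-- The other half of condition (3) of a twist map for the free `R`-module monad:
`t ∘ (K ⋄ μ) = (μ ⋄ K) ∘ (K ⋄ t) ∘ (t ⋄ K)`. -/
theorem Ktw_mu_right (R : Type*) [Ring R] (X : Type*) (Ψ : (((X →₀ R) →₀ R) →₀ R)) :
    Ktw R X (Finsupp.mapDomain (Kmu R X) Ψ) =
      Kmu R (X →₀ R) (Finsupp.mapDomain (Ktw R X) (Ktw R (X →₀ R) Ψ)) := by
  conv_rhs => rw [Ktw]
  rw [Finsupp.mapDomain_add, mapDomain_sub, Kmu_add, Kmu_sub,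
    Finsupp.mapDomain_single, Kmu_single, one_smul,
    ← Finsupp.mapDomain_comp]
  have hcomp : (Ktw R X ∘ Keta R (X →₀ R)) = Finsupp.mapDomain (Keta R X) := by
    funext g
    exact Ktw_single_one g
  rw [hcomp, Kmu_mapDomain_mapDomain, Kmu_mapDomain_Ktw, Ktw, Ktw, Kmu_assoc]
  abel
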